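/- arXiv:2412.03415 — 2 statements merged into one kernel-verified Lean document; each statement's English description precedes it below -/
import Mathlib

section
/- Let (η_i)_{i≥1} be i.i.d. random variables taking values in the nonnegative integers. Set W_m = η_1 + ⋯ + η_m and let χ = inf{ m ≥ 1 : W_m − m = −1 } (the first time the random walk Q_0 = 1, Q_i = Q_{i−1} + η_i − 1 hits 0). Then for every m ≥ 1, P(χ = m) = (1/m) · P(W_m = m − 1). -/
open Function MeasureTheory ProbabilityTheory
open scoped ENNReal

/-!
Only the law of `(η 0, …, η (m-1))` matters, and it is invariant under cyclic rotation of the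
coordinates. By the cycle lemma, among the `m` rotations of an increment vector whose walk
`W_j - j` ends at `-1` after `m` steps, exactly one keeps the walk nonnegative before time `m`:
the rotation starting at the first minimum of the walk. So `{W_m = m - 1}` splits into `m`
disjoint events, each a rotation of `{χ = m}` and hence of the same probability.
-/

namespace Kemperman

def walk (y : ℕ → ℕ) (j : ℕ) : ℤ := ∑ i ∈ Finset.range j, (y i : ℤ) - j

section Walk

variable {y z : ℕ → ℕ} {m j : ℕ}

@[simp] lemma walk_zero (y : ℕ → ℕ) : walk y 0 = 0 := by simp [walk]

lemma walk_succ (y : ℕ → ℕ) (j : ℕ) : walk y (j + 1) = walk y j + y j - 1 := by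
  simp only [walk, Finset.sum_range_succ]; push_cast; ring

lemma walk_shift (y : ℕ → ℕ) (r j : ℕ) :
    walk (fun i => y (i + r)) j = walk y (r + j) - walk y r := by
  induction j with
  | zero => simp
  | succ j ih => rw [walk_succ, ih, ← add_assoc, walk_succ, add_comm j r]; ring

lemma walk_add_period (hper : ∀ i, y (i + m) = y i) (k : ℕ) :
    walk y (k + m) = walk y k + walk y m := by
  induction k with
  | zero => simp
  | succ k ih => rw [add_right_comm, walk_succ, ih, hper, walk_succ]; ring

lemma walk_congr (h : ∀ i < m, y i = z i) (hj : j ≤ m) : walk y j = walk z j := by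
  unfold walk
  congr 1
  exact Finset.sum_congr rfl fun i hi => by rw [h i (by grind)]

/-- The walk moves down by at most one per step, so it cannot become negative without
visiting `-1`. -/
lemma nonneg_of_forall_ne_neg_one (h : ∀ j, 1 ≤ j → j < m → walk y j ≠ -1) :
    ∀ j < m, 0 ≤ walk y j := by
  intro j hj
  induction j with
  | zero => simp
  | succ j ih =>
    have := h (j + 1) (by omega) hj
    rw [walk_succ] at this ⊢
    have := ih (by omega)
    omega

lemma sInf_walk_eq_neg_one_eq_iff (hm : 1 ≤ m) :
    sInf {j | 1 ≤ j ∧ walk y j = -1} = m ↔ walk y m = -1 ∧ ∀ j < m, 0 ≤ walk y j := by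
  set H := {j | 1 ≤ j ∧ walk y j = -1}
  constructor
  · intro hH
    have hne : H.Nonempty := Nat.nonempty_of_pos_sInf (by omega)
    have hmH : m ∈ H := hH ▸ Nat.sInf_mem hne
    refine ⟨hmH.2, nonneg_of_forall_ne_neg_one fun j h1 hj hj' => ?_⟩
    exact Nat.notMem_of_lt_sInf (s := H) (by omega) ⟨h1, hj'⟩
  · rintro ⟨hmem, hpos⟩
    have hmH : m ∈ H := ⟨hm, hmem⟩
    refine le_antisymm (Nat.sInf_le hmH) (le_csInf ⟨m, hmH⟩ fun j ⟨_, hj⟩ => ?_)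
    by_contra! hjm
    have := hpos j hjm
    omega

end Walk

section Cycle

variable {S : ℕ → ℤ} {m r : ℕ}

lemma forall_le_add_iff (hS : ∀ k, S (k + m) = S k - 1) (hr : r < m) :
    (∀ j < m, S r ≤ S (r + j)) ↔ (∀ k < m, S r ≤ S k) ∧ ∀ k < r, S r < S k := by
  constructor
  · intro h
    have below : ∀ k < r, S r < S k := fun k hk => by
      have := h (k + m - r) (by omega)
      rw [show r + (k + m - r) = k + m by omega, hS] at this
      omega
    refine ⟨fun k hk => ?_, below⟩
    rcases lt_or_ge k r with hkr | hrk
    · exact (below k hkr).le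
    · simpa [show r + (k - r) = k by omega] using h (k - r) (by omega)
  · rintro ⟨hmin, hfirst⟩ j hj
    rcases lt_or_ge (r + j) m with h | h
    · exact hmin _ h
    · have := hfirst (r + j - m) (by omega)
      rw [show r + j = r + j - m + m by omega, hS]
      omega

/-- The cycle lemma; the starting point is the first minimum of `S` on `[0, m)`. -/
lemma existsUnique_forall_le_add (hS : ∀ k, S (k + m) = S k - 1) :
    ∃! r, r < m ∧ ∀ j < m, S r ≤ S (r + j) := by
  classical
  have hm : (Finset.range m).Nonempty := by
    refine Finset.nonempty_range_iff.2 fun h => ?_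
    have := hS 0
    simp only [h, add_zero] at this
    omega
  obtain ⟨r, hrm, hrmin, hrfirst⟩ : ∃ r < m, (∀ k < m, S r ≤ S k) ∧ ∀ k < r, S r < S k := by
    obtain ⟨v, hv, hvmin⟩ := Finset.exists_min_image _ S hm
    have hex : ∃ r, S r = S v := ⟨v, rfl⟩
    have hvm : v < m := Finset.mem_range.1 hv
    refine ⟨Nat.find hex, (Nat.find_min' hex rfl).trans_lt hvm, fun k hk => ?_, fun k hk => ?_⟩
    · rw [Nat.find_spec hex]
      exact hvmin k (Finset.mem_range.2 hk)
    · rw [Nat.find_spec hex]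
      have hkm : k < m := hk.trans_le (Nat.find_min' hex rfl) |>.trans hvm
      exact (hvmin k (Finset.mem_range.2 hkm)).lt_of_ne (Ne.symm (Nat.find_min hex hk))
  refine ⟨r, ⟨hrm, (forall_le_add_iff hS hrm).2 ⟨hrmin, hrfirst⟩⟩, fun r' ⟨hr'm, hr'⟩ => ?_⟩
  obtain ⟨hr'min, hr'first⟩ := (forall_le_add_iff hS hr'm).1 hr'
  rcases lt_trichotomy r' r with h | h | h
  · linarith [hrfirst r' h, hr'min r hrm]
  · exact h
  · linarith [hr'first r h, hrmin r' hr'm]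

end Cycle

section Periodic

variable {y : ℕ → ℕ} {m : ℕ}

lemma walk_shift_period (hper : ∀ i, y (i + m) = y i) (r : ℕ) :
    walk (fun i => y (i + r)) m = walk y m := by
  rw [walk_shift, walk_add_period hper]; ring

lemma existsUnique_walk_shift_nonneg (hper : ∀ i, y (i + m) = y i) (hsum : walk y m = -1) :
    ∃! r, r < m ∧ ∀ j < m, 0 ≤ walk (fun i => y (i + r)) j := by
  have hS : ∀ k, walk y (k + m) = walk y k - 1 := fun k => by
    rw [walk_add_period hper, hsum]; ring
  simpa only [walk_shift, sub_nonneg] using existsUnique_forall_le_add hS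

end Periodic

section Rotation

variable (m : ℕ) [NeZero m]

def periodize (x : Fin m → ℕ) (i : ℕ) : ℕ := x (Fin.ofNat m i)

def rotate (r : Fin m) (x : Fin m → ℕ) : Fin m → ℕ := x ∘ Equiv.addRight r

def firstPassageSet : Set (Fin m → ℕ) :=
  {x | walk (periodize m x) m = -1 ∧ ∀ j < m, 0 ≤ walk (periodize m x) j}

def bridgeSet : Set (Fin m → ℕ) := {x | walk (periodize m x) m = -1}

variable {m}

lemma periodize_add_period (x : Fin m → ℕ) (i : ℕ) :
    periodize m x (i + m) = periodize m x i := by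
  simp only [periodize]
  congr 1
  ext
  simp

lemma periodize_rotate (r : Fin m) (x : Fin m → ℕ) :
    periodize m (rotate m r x) = fun i => periodize m x (i + r) := by
  ext i
  simp only [periodize, rotate, comp_apply, Equiv.coe_addRight]
  congr 1
  ext
  simp [Fin.val_add]

lemma walk_periodize {j : ℕ} (y : ℕ → ℕ) (hj : j ≤ m) :
    walk (periodize m fun i : Fin m => y i) j = walk y j :=
  walk_congr (fun i hi => by simp [periodize, Nat.mod_eq_of_lt hi]) hj

lemma rotate_mem_firstPassageSet_iff {x : Fin m → ℕ} (hx : x ∈ bridgeSet m) (r : Fin m) :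
    rotate m r x ∈ firstPassageSet m ↔ ∀ j < m, 0 ≤ walk (fun i => periodize m x (i + r)) j := by
  simp only [firstPassageSet, Set.mem_ofPred_eq, periodize_rotate,
    walk_shift_period (periodize_add_period x)]
  exact and_iff_right hx

lemma bridgeSet_eq_iUnion : bridgeSet m = ⋃ r : Fin m, rotate m r ⁻¹' firstPassageSet m := by
  ext x
  simp only [Set.mem_iUnion, Set.mem_preimage]
  refine ⟨fun hx => ?_, fun ⟨r, hr⟩ => ?_⟩
  · obtain ⟨r, ⟨hrm, hr⟩, -⟩ := existsUnique_walk_shift_nonneg (periodize_add_period x) hx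
    exact ⟨⟨r, hrm⟩, (rotate_mem_firstPassageSet_iff hx _).2 hr⟩
  · have := hr.1
    rwa [periodize_rotate, walk_shift_period (periodize_add_period x)] at this

lemma pairwise_disjoint_rotate_preimage :
    Pairwise (Disjoint on fun r : Fin m => rotate m r ⁻¹' firstPassageSet m) := by
  refine fun r r' hne => Set.disjoint_left.2 fun x hr hr' => hne ?_
  have hx : x ∈ bridgeSet m := (bridgeSet_eq_iUnion (m := m)) ▸ Set.mem_iUnion.2 ⟨r, hr⟩
  obtain ⟨u, -, hu⟩ := existsUnique_walk_shift_nonneg (periodize_add_period x) hx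
  exact Fin.ext <| (hu r ⟨r.isLt, (rotate_mem_firstPassageSet_iff hx r).1 hr⟩).trans
    (hu r' ⟨r'.isLt, (rotate_mem_firstPassageSet_iff hx r').1 hr'⟩).symm

end Rotation

lemma measurePreserving_comp_equiv {ι α : Type*} [Fintype ι] [MeasurableSpace α]
    (μ : Measure α) [SigmaFinite μ] (e : ι ≃ ι) :
    MeasurePreserving (fun x : ι → α => x ∘ e)
      (Measure.pi fun _ => μ) (Measure.pi fun _ => μ) := by
  convert measurePreserving_piCongrLeft (fun _ => μ) e.symm
  ext x
  simp [MeasurableEquiv.coe_piCongrLeft, Equiv.piCongrLeft_apply_eq_cast]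

lemma measure_iUnion_preimage_eq_card_mul {ι β : Type*} [Fintype ι] [MeasurableSpace β]
    {μ : Measure β} {f : ι → β → β} (hf : ∀ i, MeasurePreserving (f i) μ μ) {s : Set β}
    (hs : MeasurableSet s) (hdisj : Pairwise (Disjoint on fun i => f i ⁻¹' s)) :
    μ (⋃ i, f i ⁻¹' s) = Fintype.card ι * μ s := by
  rw [measure_iUnion hdisj fun i => (hf i).measurable hs, tsum_fintype]
  simp [(hf _).measure_preimage hs.nullMeasurableSet]

lemma map_fin_eq_pi {Ω α : Type*} [MeasurableSpace Ω] [MeasurableSpace α] {μ : Measure Ω}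
    [IsProbabilityMeasure μ] {ν : Measure α} {η : ℕ → Ω → α} (hmeas : ∀ i, Measurable (η i))
    (hindep : iIndepFun η μ) (hident : ∀ i, μ.map (η i) = ν) (m : ℕ) :
    μ.map (fun ω (i : Fin m) => η i ω) = Measure.pi fun _ => ν := by
  have := (iIndepFun_iff_map_fun_eq_pi_map fun i : Fin m => (hmeas i).aemeasurable).1
    (hindep.precomp Fin.val_injective)
  simpa only [hident] using this

lemma pi_bridgeSet (m : ℕ) [NeZero m] (μ : Measure ℕ) [SigmaFinite μ] :
    Measure.pi (fun _ : Fin m => μ) (bridgeSet m)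
      = m * Measure.pi (fun _ : Fin m => μ) (firstPassageSet m) := by
  rw [bridgeSet_eq_iUnion, measure_iUnion_preimage_eq_card_mul (f := rotate m)
    (fun r => measurePreserving_comp_equiv μ (Equiv.addRight r)) .of_discrete
    pairwise_disjoint_rotate_preimage, Fintype.card_fin]

end Kemperman

open Kemperman

/-- **Kemperman's formula for i.i.d. increments, k = 1.** For i.i.d. `ℕ`-valued `η i`
with partial sums `W m`, and `χ = inf { m ≥ 1 : W m - m = -1 }` (the hitting time of `0`
by the walk `Q i = 1 + W i - i`), one has `P(χ = m) = (1/m) · P(W m = m - 1)`. -/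
theorem kemperman_iid
    {Ω : Type*} [MeasureSpace Ω] [IsProbabilityMeasure (ℙ : Measure Ω)]
    (η : ℕ → Ω → ℕ) (hmeas : ∀ i, Measurable (η i))
    (hindep : iIndepFun η ℙ)
    (hident : ∀ i, Measure.map (η i) ℙ = Measure.map (η 0) ℙ)
    (W : ℕ → Ω → ℕ) (hW : ∀ j ω, W j ω = ∑ i ∈ Finset.range j, η i ω)
    (χ : Ω → ℕ)
    (hχ : ∀ ω, χ ω = sInf {j : ℕ | 1 ≤ j ∧ (W j ω : ℤ) - (j : ℤ) = -1})
    (m : ℕ) (hm : 1 ≤ m) :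
    ℙ {ω | χ ω = m} = (1 : ℝ≥0∞) / m * ℙ {ω | (W m ω : ℤ) = (m : ℤ) - 1} := by
  have hm0 : NeZero m := ⟨by omega⟩
  set T : Ω → Fin m → ℕ := fun ω i => η i ω
  have hlaw : Measure.map T ℙ = Measure.pi fun _ => Measure.map (η 0) ℙ :=
    map_fin_eq_pi hmeas hindep hident m
  have hwalk (ω : Ω) (j : ℕ) : walk (η · ω) j = W j ω - j := by simp [walk, hW]
  have hwalkT (ω : Ω) {j : ℕ} (hj : j ≤ m) : walk (periodize m (T ω)) j = walk (η · ω) j :=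
    walk_periodize (η · ω) hj
  have hA : {ω | χ ω = m} = T ⁻¹' firstPassageSet m := by
    ext ω
    have hχω : χ ω = sInf {j | 1 ≤ j ∧ walk (η · ω) j = -1} := by simp only [hχ, hwalk]
    simp only [Set.mem_ofPred_eq, Set.mem_preimage, firstPassageSet, hχω,
      sInf_walk_eq_neg_one_eq_iff hm, hwalkT ω le_rfl]
    exact and_congr_right fun _ => forall₂_congr fun j hj => by rw [hwalkT ω hj.le]
  have hB : {ω | (W m ω : ℤ) = (m : ℤ) - 1} = T ⁻¹' bridgeSet m := by
    ext ω
    simp only [Set.mem_ofPred_eq, Set.mem_preimage, bridgeSet, hwalkT ω le_rfl, hwalk]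
    omega
  have hT : Measurable T := by fun_prop
  rw [hA, hB, ← Measure.map_apply hT .of_discrete, ← Measure.map_apply hT .of_discrete, hlaw,
    pi_bridgeSet, ← mul_assoc, one_div,
    ENNReal.inv_mul_cancel (by exact_mod_cast hm0.ne) (ENNReal.natCast_ne_top m), one_mul]
end

section
/- Fix p ∈ (0,1) and b > 0. Define G_{b,+} : [0,∞) → [0,1] by G_{b,+}(0) = 0 and G_{b,+}(x) = min( exp(−x^{−b}) / (1−p), 1 ) for x > 0, and let G_{b,+}^{-1}(y) = inf{ x ≥ 0 : G_{b,+}(x) ≥ y } denote its generalized inverse. Then G_{b,+}^{-1}(e^{−u}) = ( u − log(1−p) )^{−1/b} for all u ≥ 0, and for every ε > 0 the integral ∫_{1/ε}^{∞} G_{b,+}^{-1}(e^{−u}) · u^{−1} du is finite. -/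
/-! The generalized inverse is computed by solving `exp(-u) ≤ exp(-x^{-b})/(1-p)` for `x`:
taking logarithms this is `x^{-b} ≤ u - log(1-p)`, i.e. `x ≥ (u - log(1-p))^{-1/b}`, so the
superlevel set is a closed half-line and its infimum is its endpoint. Since `log(1-p) < 0`, the
integrand is then at most `u^{-1/b-1}`, which is integrable at infinity. -/

open MeasureTheory Real Set
open scoped ENNReal

lemma exp_neg_le_exp_neg_div_iff {c u v : ℝ} (hc : 0 < c) :
    exp (-u) ≤ exp (-v) / c ↔ v ≤ u - log c := by
  rw [le_div_iff₀ hc, ← exp_log hc, ← exp_add, exp_le_exp, exp_log hc]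
  constructor <;> intro h <;> linarith

lemma rpow_neg_le_iff_rpow_neg_one_div_le {b x s : ℝ} (hb : 0 < b) (hx : 0 < x) (hs : 0 < s) :
    x ^ (-b) ≤ s ↔ s ^ (-(1 / b)) ≤ x := by
  rw [← one_div_neg_eq_neg_one_div, one_div, rpow_inv_le_iff_of_neg hs hx (neg_neg_of_pos hb)]

lemma setOf_exp_neg_le_eq_Ici {c b u : ℝ} (hc0 : 0 < c) (hc1 : c < 1) (hb : 0 < b)
    (hu : 0 ≤ u) (G : ℝ → ℝ) (hG0 : G 0 = 0)
    (hG : ∀ x : ℝ, 0 < x → G x = min (exp (-(x ^ (-b))) / c) 1) :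
    {x : ℝ | 0 ≤ x ∧ exp (-u) ≤ G x} = Ici ((u - log c) ^ (-(1 / b))) := by
  have hs : 0 < u - log c := by linarith [log_neg hc0 hc1]
  ext x
  rcases lt_or_ge 0 x with hx | hx
  · simp only [mem_ofPred_eq, mem_Ici, hx.le, true_and, hG x hx, le_min_iff,
      exp_le_one_iff.mpr (neg_nonpos.mpr hu), and_true, exp_neg_le_exp_neg_div_iff hc0,
      rpow_neg_le_iff_rpow_neg_one_div_le hb hx hs]
  · have hlt : x < (u - log c) ^ (-(1 / b)) := hx.trans_lt (rpow_pos_of_pos hs _)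
    simp only [mem_ofPred_eq, mem_Ici, not_le.mpr hlt, iff_false, not_and]
    intro hx0
    rw [le_antisymm hx hx0, hG0]
    exact not_le.mpr (exp_pos _)

lemma setLIntegral_Ici_rpow_neg_sub_div_lt_top {a L t : ℝ} (ha : 0 < a) (hL : L ≤ 0)
    (ht : 0 < t) : ∫⁻ u in Ici t, ENNReal.ofReal ((u - L) ^ (-a) / u) < ⊤ := by
  have hdom : ∀ u ∈ Ici t,
      ENNReal.ofReal ((u - L) ^ (-a) / u) ≤ ENNReal.ofReal (u ^ (-a - 1)) := by
    intro u hu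
    have hu0 : 0 < u := ht.trans_le hu
    rw [rpow_sub hu0, rpow_one]
    gcongr ENNReal.ofReal (?_ / u)
    exact rpow_le_rpow_of_nonpos hu0 (by linarith) (neg_nonpos.mpr ha.le)
  have hint : IntegrableOn (fun u : ℝ => u ^ (-a - 1)) (Ici t) := by
    rw [integrableOn_Ici_iff_integrableOn_Ioi]
    exact integrableOn_Ioi_rpow_of_lt (by linarith) ht
  exact (setLIntegral_mono (by fun_prop) hdom).trans_lt hint.lintegral_lt_top

/-- **Min-summability of `G_{b,+}`.** For `p ∈ (0,1)` and `b > 0`, the distribution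
function `G_{b,+}(0) = 0`, `G_{b,+}(x) = min(exp(-x^{-b})/(1-p), 1)` for `x > 0` has
generalized inverse satisfying `G_{b,+}^{-1}(e^{-u}) = (u - log(1-p))^{-1/b}`, and
`∫_{1/ε}^∞ G_{b,+}^{-1}(e^{-u}) du/u` is finite for every `ε > 0`. -/
theorem Gb_min_summable
    (p b : ℝ) (hp0 : 0 < p) (hp1 : p < 1) (hb : 0 < b)
    (G Ginv : ℝ → ℝ)
    (hG0 : G 0 = 0)
    (hG : ∀ x : ℝ, 0 < x → G x = min (Real.exp (-(x ^ (-b))) / (1 - p)) 1)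
    (hGinv : ∀ y : ℝ, Ginv y = sInf {x : ℝ | 0 ≤ x ∧ y ≤ G x}) :
    (∀ u : ℝ, 0 ≤ u →
        Ginv (Real.exp (-u)) = (u - Real.log (1 - p)) ^ (-(1 / b))) ∧
    ∀ ε : ℝ, 0 < ε →
      (∫⁻ u in Set.Ici (1 / ε), ENNReal.ofReal (Ginv (Real.exp (-u)) / u)) < ⊤ := by
  have hq0 : 0 < 1 - p := by linarith
  have hq1 : 1 - p < 1 := by linarith
  have hGinv_exp : ∀ u : ℝ, 0 ≤ u → Ginv (exp (-u)) = (u - log (1 - p)) ^ (-(1 / b)) :=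
    fun u hu => by rw [hGinv, setOf_exp_neg_le_eq_Ici hq0 hq1 hb hu G hG0 hG, csInf_Ici]
  refine ⟨hGinv_exp, fun ε hε => ?_⟩
  have ht : 0 < 1 / ε := by positivity
  rw [setLIntegral_congr_fun measurableSet_Ici
    fun u hu => by rw [hGinv_exp u (ht.le.trans hu)]]
  exact setLIntegral_Ici_rpow_neg_sub_div_lt_top (by positivity)
    (log_nonpos hq0.le hq1.le) ht
end
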